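/- arXiv:2011.00352 — 3 statements merged into one kernel-verified Lean document; each statement's English description precedes it below -/
import Mathlib

section
/- Let G be a simple graph such that for every n ∈ ℕ there is an isometric path of length n in G. Then there is a family (A_n)_{n ∈ ℕ} of pairwise disjoint finite subsets of the vertex set of G, with no edge of G between distinct A_n, such that each induced subgraph G↾A_n is a path of length at least n that is isometric in G. -/
open SimpleGraph

/-- An induced path of length `n` in `G`: an injective sequence of `n+1` vertices,
adjacent exactly when consecutive. -/
def IsInducedPath {V : Type*} (G : SimpleGraph V) {n : ℕ} (x : Fin (n + 1) → V) : Prop :=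
  Function.Injective x ∧ ∀ i j, G.Adj (x i) (x j) ↔ Nat.dist i.val j.val = 1

/-- `G` contains finite induced paths of unbounded length. -/
def HasUnboundedPaths {V : Type*} (G : SimpleGraph V) : Prop :=
  ∀ n : ℕ, ∃ x : Fin (n + 1) → V, IsInducedPath G x

/-- `G` is path-minimal. -/
def PathMinimal {V : Type*} (G : SimpleGraph V) : Prop :=
  HasUnboundedPaths G ∧
    ∀ A : Set V, HasUnboundedPaths (G.induce A) → Nonempty (G ↪g G.induce A)

/-- The age of `G` is contained in the age of `H`. -/
def AgeSubset {V W : Type*} (G : SimpleGraph V) (H : SimpleGraph W) : Prop :=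
  ∀ (n : ℕ) (F : SimpleGraph (Fin n)), Nonempty (F ↪g G) → Nonempty (F ↪g H)

/-- The age of `G` contains no infinite antichain for embeddability. -/
def AgeWQO {V : Type*} (G : SimpleGraph V) : Prop :=
  ∀ f : ℕ → Σ n : ℕ, SimpleGraph (Fin n),
    (∀ i, Nonempty ((f i).2 ↪g G)) →
    ∃ i j, i ≠ j ∧ Nonempty ((f i).2 ↪g (f j).2)

/-- The set `A` carries an induced path of length `n` of `G` (covering all of `A`). -/
def IsPathOn {V : Type*} (G : SimpleGraph V) (A : Set V) (n : ℕ) : Prop :=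
  ∃ x : Fin (n + 1) → V, Function.Injective x ∧ Set.range x = A ∧
    ∀ i j, G.Adj (x i) (x j) ↔ Nat.dist i.val j.val = 1

/-- `G` embeds a direct sum of finite induced paths of unbounded length. -/
def EmbedsDirectSumOfPaths {V : Type*} (G : SimpleGraph V) : Prop :=
  ∃ A : ℕ → Set V, (∀ n, (A n).Finite) ∧
    (∀ m n, m ≠ n → Disjoint (A m) (A n)) ∧
    (∀ m n, m ≠ n → ∀ x ∈ A m, ∀ y ∈ A n, ¬ G.Adj x y) ∧
    ∀ n, ∃ m, n ≤ m ∧ IsPathOn G (A n) m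

/-- `G` embeds a complete sum of finite induced paths of unbounded length. -/
def EmbedsCompleteSumOfPaths {V : Type*} (G : SimpleGraph V) : Prop :=
  ∃ A : ℕ → Set V, (∀ n, (A n).Finite) ∧
    (∀ m n, m ≠ n → Disjoint (A m) (A n)) ∧
    (∀ m n, m ≠ n → ∀ x ∈ A m, ∀ y ∈ A n, G.Adj x y) ∧
    ∀ n, ∃ m, n ≤ m ∧ IsPathOn G (A n) m

/-- An isometric path of length `n` in `G`. -/
def IsIsometricPath {V : Type*} (G : SimpleGraph V) {n : ℕ} (x : Fin (n + 1) → V) : Prop :=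
  (∀ i : Fin n, G.Adj (x i.castSucc) (x i.succ)) ∧
  ∀ i j, G.dist (x i) (x j) = Nat.dist i.val j.val

/-- The set `A` carries an induced path of length `n` of `G` which is isometric in `G`. -/
def IsIsometricPathOn {V : Type*} (G : SimpleGraph V) (A : Set V) (n : ℕ) : Prop :=
  ∃ x : Fin (n + 1) → V, Function.Injective x ∧ Set.range x = A ∧
    (∀ i j, G.Adj (x i) (x j) ↔ Nat.dist i.val j.val = 1) ∧
    (∀ i j, G.dist (x i) (x j) = Nat.dist i.val j.val)

/-- The incomparability graph of a poset. -/
def incGraph (α : Type*) [PartialOrder α] : SimpleGraph α where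
  Adj a b := ¬ a ≤ b ∧ ¬ b ≤ a
  symm := ⟨fun _ _ h => ⟨h.2, h.1⟩⟩
  loopless := ⟨fun _ h => h.1 le_rfl⟩

/-- `w` is a (finite) factor of the infinite word `u`. -/
def IsFactor {A : Type*} (u : ℕ → A) (w : List A) : Prop :=
  ∃ p : ℕ, w = (List.range w.length).map fun i => u (p + i)

/-- `u` is uniformly recurrent. -/
def UniformlyRecurrent {A : Type*} (u : ℕ → A) : Prop :=
  ∀ n : ℕ, ∃ m : ℕ, ∀ v w : List A, IsFactor u v → IsFactor u w →
    v.length = n → w.length = m → v <:+: w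

/-- The set of factors of `u` is inexhaustible. -/
def Inexhaustible {A : Type*} (u : ℕ → A) : Prop :=
  ∀ v v' : List A, IsFactor u v → IsFactor u v' → ∃ w : List A, IsFactor u (v ++ w ++ v')

/-- The path on `n` vertices. -/
def pathG (n : ℕ) : SimpleGraph (Fin n) where
  Adj i j := Nat.dist i.val j.val = 1
  symm := ⟨fun i j h => by (try dsimp only at h ⊢); rwa [Nat.dist_comm]⟩
  loopless := ⟨fun i h => by (try dsimp only at h); simp [Nat.dist_self] at h⟩

/-- The graph `Ĝ_k` on `ℕ × ℕ`. -/
def Ghat (k : ℕ) : SimpleGraph (ℕ × ℕ) where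
  Adj a b := (a.1 = b.1 ∧ Nat.dist a.2 b.2 = 1) ∨ (a.1 ≠ b.1 ∧ ¬ a.2 ≡ b.2 [MOD k])
  symm := by
    constructor
    intro a b h
    rcases h with ⟨h1, h2⟩ | ⟨h1, h2⟩
    · exact Or.inl ⟨h1.symm, by rwa [Nat.dist_comm]⟩
    · exact Or.inr ⟨h1.symm, fun h => h2 h.symm⟩
  loopless := by
    constructor
    intro a h
    rcases h with ⟨_, h2⟩ | ⟨h1, _⟩
    · simp [Nat.dist_self] at h2
    · exact h1 rfl

/-- The vertex set of `Q̂_k`. -/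
def Qset : Set (ℕ × ℕ) := {p : ℕ × ℕ | p.2 < p.1 + 5}

/-- The graph `Q̂_k`, induced by `Ĝ_k` on `Qset`. -/
def Qhat (k : ℕ) : SimpleGraph Qset := (Ghat k).induce Qset

/-- `M` is a module (autonomous set) of `G`. -/
def IsModule {V : Type*} (G : SimpleGraph V) (M : Set V) : Prop :=
  ∀ v ∉ M, (∀ x ∈ M, G.Adj v x) ∨ (∀ x ∈ M, ¬ G.Adj v x)

/-- A trivial subset of a vertex set: empty, a singleton, or everything. -/
def IsTrivialSet {V : Type*} (M : Set V) : Prop :=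
  M = ∅ ∨ (∃ v, M = {v}) ∨ M = Set.univ

/-- The graph `Ĝ_{u,⊕}` associated with the word `u : ℕ → Bool` and the Boolean sum. -/
def GhatXor (u : ℕ → Bool) : SimpleGraph (ℕ × ℕ) where
  Adj a b := (a.1 = b.1 ∧ Nat.dist a.2 b.2 = 1) ∨ (a.1 ≠ b.1 ∧ u a.2 ≠ u b.2)
  symm := by
    constructor
    intro a b h
    rcases h with ⟨h1, h2⟩ | ⟨h1, h2⟩
    · exact Or.inl ⟨h1.symm, by rwa [Nat.dist_comm]⟩
    · exact Or.inr ⟨h1.symm, h2.symm⟩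
  loopless := by
    constructor
    intro a h
    rcases h with ⟨_, h2⟩ | ⟨h1, _⟩
    · simp [Nat.dist_self] at h2
    · exact h1 rfl

/-- The graph `Ĝ_{u,π₂}` associated with the word `u : ℕ → Bool` and the second projection. -/
def GhatPi2 (u : ℕ → Bool) : SimpleGraph (ℕ × ℕ) where
  Adj a b := (a.1 = b.1 ∧ Nat.dist a.2 b.2 = 1) ∨
    (a.1 < b.1 ∧ u b.2 = true) ∨ (b.1 < a.1 ∧ u a.2 = true)
  symm := by
    constructor
    intro a b h
    rcases h with ⟨h1, h2⟩ | ⟨h1, h2⟩ | ⟨h1, h2⟩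
    · exact Or.inl ⟨h1.symm, by rwa [Nat.dist_comm]⟩
    · exact Or.inr (Or.inr ⟨h1, h2⟩)
    · exact Or.inr (Or.inl ⟨h1, h2⟩)
  loopless := by
    constructor
    intro a h
    rcases h with ⟨_, h2⟩ | ⟨h1, _⟩ | ⟨h1, _⟩
    · simp [Nat.dist_self] at h2
    · exact lt_irrefl _ h1
    · exact lt_irrefl _ h1

/-- `u` has a constant factor of length `m`. -/
def HasConstFactor (u : ℕ → Bool) (m : ℕ) : Prop :=
  ∃ p : ℕ, ∀ i < m, u (p + i) = u p

/-!
Avoiding a finite set `F` together with its neighbourhood costs an isometric path at most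
`3 |F|` of its vertices: two path vertices within distance one of the same `v` are at distance
at most two in `G`, hence at most two apart along the path. Cutting a long enough isometric path
into `3 |F| + 1` blocks of `n + 1` consecutive vertices therefore leaves a block, itself an
isometric path of length `n`, far from `F`. Choosing the `n`-th path far from the union of the
previous ones gives the family.
-/

theorem Finset.card_le_of_forall_dist_le {S : Finset ℕ} {d : ℕ}
    (h : ∀ a ∈ S, ∀ b ∈ S, Nat.dist a b ≤ d) : S.card ≤ d + 1 := by
  rcases S.eq_empty_or_nonempty with rfl | hS
  · simp
  have hsub : S ⊆ Finset.Icc (S.min' hS) (S.min' hS + d) := fun a ha => by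
    have hmin := S.min'_le a ha
    have hdist := h a ha _ (S.min'_mem hS)
    rw [Nat.dist_eq_sub_of_le_right hmin] at hdist
    exact Finset.mem_Icc.2 ⟨hmin, by omega⟩
  exact (Finset.card_le_card hsub).trans_eq (by rw [Nat.card_Icc]; omega)

theorem Finset.exists_block_disjoint_of_card_le {B : Finset ℕ} {k : ℕ} (hB : B.card ≤ k)
    (L : ℕ) : ∃ j ≤ k, ∀ i < L, L * j + i ∉ B := by
  have hcard : (B.image (· / L)).card < (Finset.range (k + 1)).card := by
    simpa using (Finset.card_image_le).trans_lt (Nat.lt_succ_of_le hB)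
  obtain ⟨j, hj, hjB⟩ := Finset.exists_mem_notMem_of_card_lt_card hcard
  refine ⟨j, Nat.lt_succ_iff.1 (Finset.mem_range.1 hj), fun i hi hmem => hjB ?_⟩
  refine Finset.mem_image.2 ⟨L * j + i, hmem, ?_⟩
  rw [Nat.mul_add_div (by omega), Nat.div_eq_of_lt hi, add_zero]

namespace SimpleGraph

variable {V : Type*} {G : SimpleGraph V}

theorem dist_le_two_of_eq_or_adj {u v w : V} (hu : G.Adj v u ∨ v = u)
    (hw : G.Adj v w ∨ v = w) : G.dist u w ≤ 2 := by
  have huv : G.edist u v ≤ 1 := by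
    rw [edist_comm]
    exact edist_le_one_iff_adj_or_eq.2 hu
  have hvw : G.edist v w ≤ 1 := edist_le_one_iff_adj_or_eq.2 hw
  exact ENat.toNat_le_of_le_natCast <|
    (G.edist_triangle (v := v)).trans ((add_le_add huv hvw).trans_eq one_add_one_eq_two)

theorem isIsometricPathOn_range {n : ℕ} {y : Fin (n + 1) → V}
    (hy : ∀ i j, G.dist (y i) (y j) = Nat.dist i.val j.val) :
    IsIsometricPathOn G (Set.range y) n := by
  refine ⟨y, fun i j hij => Fin.ext ?_, rfl, fun i j => ?_, hy⟩
  · have := hy i j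
    rw [hij, dist_self] at this
    exact Nat.eq_of_dist_eq_zero this.symm
  · rw [← dist_eq_one_iff_adj, hy]

open Classical in
theorem card_indices_near_le_three {N : ℕ} {x : Fin (N + 1) → V}
    (hx : ∀ i j, G.dist (x i) (x j) = Nat.dist i.val j.val) (v : V) :
    ((Finset.univ.filter fun i => G.Adj v (x i) ∨ v = x i).image Fin.val).card ≤ 3 := by
  refine Finset.card_le_of_forall_dist_le ?_
  simp only [Finset.mem_image, Finset.mem_filter, Finset.mem_univ, true_and]
  rintro _ ⟨i, hi, rfl⟩ _ ⟨j, hj, rfl⟩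
  exact hx i j ▸ dist_le_two_of_eq_or_adj hi hj

open Classical in
theorem exists_isometricPathOn_far_from {N n : ℕ} {x : Fin (N + 1) → V}
    (hx : ∀ i j, G.dist (x i) (x j) = Nat.dist i.val j.val) (F : Finset V)
    (hN : (n + 1) * (3 * F.card + 1) ≤ N) :
    ∃ A : Finset V, IsIsometricPathOn G A n ∧ ∀ v ∈ F, ∀ w ∈ A, v ≠ w ∧ ¬ G.Adj v w := by
  let near : V → Finset ℕ := fun v =>
    (Finset.univ.filter fun i => G.Adj v (x i) ∨ v = x i).image Fin.val
  have hcard : (F.biUnion near).card ≤ 3 * F.card := by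
    rw [mul_comm]
    exact Finset.card_biUnion_le_card_mul _ _ _ fun v _ => card_indices_near_le_three hx v
  obtain ⟨j, hj, hfar⟩ := Finset.exists_block_disjoint_of_card_le hcard (n + 1)
  have hlt (i : Fin (n + 1)) : (n + 1) * j + i < N + 1 := by
    have : (n + 1) * (j + 1) ≤ (n + 1) * (3 * F.card + 1) := Nat.mul_le_mul_left _ (by omega)
    rw [mul_add] at this
    omega
  let y : Fin (n + 1) → V := fun i => x ⟨(n + 1) * j + i, hlt i⟩
  have hy (i k : Fin (n + 1)) : G.dist (y i) (y k) = Nat.dist i.val k.val := by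
    simp only [y, hx, Nat.dist_add_add_left]
  refine ⟨Finset.univ.image y, by simpa using isIsometricPathOn_range hy, ?_⟩
  simp only [Finset.mem_image, Finset.mem_univ, true_and]
  rintro v hv _ ⟨i, rfl⟩
  have hnear : (n + 1) * j + i ∉ near v := fun hmem =>
    hfar i i.isLt (Finset.mem_biUnion.2 ⟨v, hv, hmem⟩)
  simp only [near, Finset.mem_image, Finset.mem_filter, Finset.mem_univ, true_and] at hnear
  exact ⟨fun heq => hnear ⟨_, Or.inr heq, rfl⟩, fun hadj => hnear ⟨_, Or.inl hadj, rfl⟩⟩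

end SimpleGraph

theorem exists_seq_pairwise_of_forall_finset {α : Type*} [DecidableEq α]
    {P : ℕ → Finset α → Prop} {R : α → α → Prop} (hR : ∀ a b, R a b → R b a)
    (h : ∀ (F : Finset α) (n : ℕ), ∃ A, P n A ∧ ∀ a ∈ F, ∀ b ∈ A, R a b) :
    ∃ A : ℕ → Finset α, (∀ n, P n (A n)) ∧ ∀ m n, m ≠ n → ∀ a ∈ A m, ∀ b ∈ A n, R a b := by
  choose next hP hR_next using h
  let used : ℕ → Finset α := fun n => Nat.rec ∅ (fun k F => F ∪ next F k) n
  have hused : Monotone used :=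
    monotone_nat_of_le_succ fun _ => Finset.subset_union_left
  have hlt {m n : ℕ} (hmn : m < n) (a : α) (ha : a ∈ next (used m) m) (b : α)
      (hb : b ∈ next (used n) n) : R a b :=
    hR_next _ n a (hused hmn (Finset.mem_union_right _ ha)) b hb
  refine ⟨fun n => next (used n) n, fun n => hP _ n, fun m n hmn a ha b hb => ?_⟩
  rcases hmn.lt_or_gt with hmn | hnm
  · exact hlt hmn a ha b hb
  · exact hR b a (hlt hnm b hb a ha)

theorem embeds_direct_sum_of_isometric_paths {V : Type*} (G : SimpleGraph V)
    (h : ∀ n : ℕ, ∃ x : Fin (n + 1) → V, IsIsometricPath G x) :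
    ∃ A : ℕ → Set V, (∀ n, (A n).Finite) ∧
      (∀ m n, m ≠ n → Disjoint (A m) (A n)) ∧
      (∀ m n, m ≠ n → ∀ x ∈ A m, ∀ y ∈ A n, ¬ G.Adj x y) ∧
      ∀ n, ∃ m, n ≤ m ∧ IsIsometricPathOn G (A n) m := by
  classical
  have hfar (F : Finset V) (n : ℕ) :
      ∃ A : Finset V, IsIsometricPathOn G A n ∧ ∀ v ∈ F, ∀ w ∈ A, v ≠ w ∧ ¬ G.Adj v w := by
    obtain ⟨x, -, hx⟩ := h ((n + 1) * (3 * F.card + 1))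
    exact SimpleGraph.exists_isometricPathOn_far_from hx F le_rfl
  obtain ⟨A, hpath, hsep⟩ := exists_seq_pairwise_of_forall_finset
    (fun _ _ hvw => ⟨hvw.1.symm, fun hadj => hvw.2 hadj.symm⟩) hfar
  refine ⟨fun n => A n, fun n => (A n).finite_toSet, fun m n hmn => ?_,
    fun m n hmn v hv w hw => (hsep m n hmn v hv w hw).2, fun n => ⟨n, le_rfl, hpath n⟩⟩
  exact Finset.disjoint_coe.2 <|
    Finset.disjoint_left.2 fun v hm hn => (hsep m n hmn v hm v hn).1 rfl
end

section
/- Let u : ℕ → {0,1} be a uniformly recurrent word that is not constant. Then every induced path of length at least φ(u) in the graph Ĝ_{u,⊕} is contained in a single component: all its vertices have the same first coordinate. -/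
open SimpleGraph

/-!
Say an induced path in `Ĝ_{u,⊕}` crosses at `t` if `y t` and `y (t+1)` lie in different
components. Vertices in different components are adjacent exactly when their letters differ, so a
crossing joins different letters, while non-consecutive path vertices in different components
carry equal letters. Inside one component the path is a monotone walk, so the run before the first
crossing reads a constant factor of `u`, and so does (reversing the path) the run after the last
one: both have at most `l` vertices, and a path of length `≥ 2l + 3` has two crossings at least two
steps apart. Looking at four consecutive vertices, consecutive crossings are at distance `1`,
and crossings at `t` and `t + 2` leave no room for a seventh vertex.
-/

lemma unit_walk_eq_or_eq {s : ℕ → ℕ} {d : ℕ}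
    (hstep : ∀ t < d, Nat.dist (s t) (s (t + 1)) = 1) (hturn : ∀ t, t + 2 ≤ d → s t ≠ s (t + 2)) :
    (∀ t ≤ d, s t = s 0 + t) ∨ (∀ t ≤ d, s t + t = s 0) := by
  have step : ∀ t < d, s (t + 1) = s t + 1 ∨ s t = s (t + 1) + 1 := fun t ht => by
    have := hstep t ht
    unfold Nat.dist at this
    omega
  rcases Nat.eq_zero_or_pos d with rfl | hd
  · exact Or.inl fun t ht => by simp [Nat.le_zero.mp ht]
  have extend : ∀ t, t + 2 ≤ d → s (t + 2) + s t = 2 * s (t + 1) := fun t ht => by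
    have := hturn t ht
    have := step t (by omega)
    have := step (t + 1) (by omega)
    simp only [add_assoc, Nat.reduceAdd] at this
    omega
  rcases step 0 hd with h0 | h0
  · refine Or.inl fun t => Nat.strong_induction_on t fun t ih ht => ?_
    match t, ih with
    | 0, _ => rfl
    | 1, _ => simpa using h0
    | t + 2, ih =>
      have := extend t ht
      have := ih t (by omega) (by omega)
      have := ih (t + 1) (by omega) (by omega)
      omega
  · refine Or.inr fun t => Nat.strong_induction_on t fun t ih ht => ?_
    match t, ih with
    | 0, _ => rfl
    | 1, _ => simpa using h0.symm
    | t + 2, ih =>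
      have := extend t ht
      have := ih t (by omega) (by omega)
      have := ih (t + 1) (by omega) (by omega)
      omega

lemma hasConstFactor_of_unit_walk {u : ℕ → Bool} {s : ℕ → ℕ} {d : ℕ}
    (hstep : ∀ t < d, Nat.dist (s t) (s (t + 1)) = 1)
    (hturn : ∀ t, t + 2 ≤ d → s t ≠ s (t + 2)) (hletter : ∀ t ≤ d, u (s t) = u (s 0)) :
    HasConstFactor u (d + 1) := by
  rcases unit_walk_eq_or_eq hstep hturn with hup | hdown
  · refine ⟨s 0, fun i hi => ?_⟩
    rw [← hup i (by omega), hletter i (by omega)]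
  · refine ⟨s d, fun i hi => ?_⟩
    have := hdown d le_rfl
    have := hdown (d - i) (by omega)
    rw [show s d + i = s (d - i) by omega, hletter (d - i) (by omega), hletter d le_rfl]

section InducedPath

variable {V : Type*} {G : SimpleGraph V} {n : ℕ} {y : ℕ → V}

lemma IsInducedPath.adj_iff_of_le (hy : IsInducedPath G fun i : Fin (n + 1) => y i) {j k : ℕ}
    (hj : j ≤ n) (hk : k ≤ n) : G.Adj (y j) (y k) ↔ Nat.dist j k = 1 :=
  hy.2 ⟨j, by omega⟩ ⟨k, by omega⟩

lemma IsInducedPath.eq_of_le (hy : IsInducedPath G fun i : Fin (n + 1) => y i) {j k : ℕ}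
    (hj : j ≤ n) (hk : k ≤ n) (h : y j = y k) : j = k :=
  congrArg Fin.val (@hy.1 ⟨j, by omega⟩ ⟨k, by omega⟩ h)

lemma IsInducedPath.reverse (hy : IsInducedPath G fun i : Fin (n + 1) => y i) :
    IsInducedPath G fun i : Fin (n + 1) => y (n - i) := by
  refine ⟨fun i j h => Fin.ext ?_, fun i j => ?_⟩
  · have := hy.eq_of_le (Nat.sub_le n i) (Nat.sub_le n j) h
    omega
  · rw [hy.adj_iff_of_le (Nat.sub_le n i) (Nat.sub_le n j)]
    unfold Nat.dist
    omega

end InducedPath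

lemma GhatXor.adj_iff_of_fst_ne {u : ℕ → Bool} {a b : ℕ × ℕ} (h : a.1 ≠ b.1) :
    (GhatXor u).Adj a b ↔ u a.2 ≠ u b.2 := by
  simp [GhatXor, h]

lemma GhatXor.adj_iff_of_fst_eq {u : ℕ → Bool} {a b : ℕ × ℕ} (h : a.1 = b.1) :
    (GhatXor u).Adj a b ↔ Nat.dist a.2 b.2 = 1 := by
  simp [GhatXor, h]

def CrossesAt (y : ℕ → ℕ × ℕ) (t : ℕ) : Prop := (y t).1 ≠ (y (t + 1)).1

lemma fst_eq_of_forall_not_crossesAt {y : ℕ → ℕ × ℕ} {p q j : ℕ}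
    (h : ∀ t, p ≤ t → t < q → ¬CrossesAt y t) (hpj : p ≤ j) (hjq : j ≤ q) :
    (y j).1 = (y p).1 := by
  induction j, hpj using Nat.le_induction with
  | base => rfl
  | succ j hpj ih => exact (not_not.mp (h j hpj (by omega))).symm.trans (ih (by omega))

lemma crossesAt_reverse_iff {y : ℕ → ℕ × ℕ} {n t : ℕ} (ht : t < n) :
    CrossesAt (fun s => y (n - s)) t ↔ CrossesAt y (n - 1 - t) := by
  rw [CrossesAt, CrossesAt, show n - 1 - t + 1 = n - t by omega,
    show n - (t + 1) = n - 1 - t by omega, ne_comm]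

namespace GhatXor

variable {u : ℕ → Bool} {n : ℕ} {y : ℕ → ℕ × ℕ}
  (hy : IsInducedPath (GhatXor u) fun i : Fin (n + 1) => y i)
include hy

lemma letter_eq_of_fst_ne {j k : ℕ} (hjk : j + 2 ≤ k) (hk : k ≤ n) (h : (y j).1 ≠ (y k).1) :
    u (y j).2 = u (y k).2 := by
  by_contra hne
  have := (hy.adj_iff_of_le (by omega) hk).mp ((adj_iff_of_fst_ne h).mpr hne)
  unfold Nat.dist at this
  omega

lemma letter_ne_of_crossesAt {t : ℕ} (ht : t < n) (h : CrossesAt y t) :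
    u (y t).2 ≠ u (y (t + 1)).2 :=
  (adj_iff_of_fst_ne h).mp <| (hy.adj_iff_of_le (by omega) ht).mpr (by simp [Nat.dist])

lemma dist_snd_of_not_crossesAt {t : ℕ} (ht : t < n) (h : ¬CrossesAt y t) :
    Nat.dist (y t).2 (y (t + 1)).2 = 1 :=
  (adj_iff_of_fst_eq (not_not.mp h)).mp <|
    (hy.adj_iff_of_le (by omega) ht).mpr (by simp [Nat.dist])

lemma snd_ne_of_fst_eq {j k : ℕ} (hjk : j ≠ k) (hj : j ≤ n) (hk : k ≤ n)
    (h : (y j).1 = (y k).1) : (y j).2 ≠ (y k).2 :=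
  fun h' => hjk (hy.eq_of_le hj hk (Prod.ext h h'))

/-- A run inside one component is a monotone walk of unit steps along it. -/
lemma hasConstFactor_of_initial_run {d : ℕ} (hd : d ≤ n) (hrow : ∀ t ≤ d, (y t).1 = (y 0).1)
    (hletter : ∀ t ≤ d, u (y t).2 = u (y 0).2) : HasConstFactor u (d + 1) :=
  hasConstFactor_of_unit_walk (s := fun t => (y t).2)
    (fun t ht => dist_snd_of_not_crossesAt hy (by omega) fun h =>
      h ((hrow t (by omega)).trans (hrow (t + 1) ht).symm))
    (fun t ht => snd_ne_of_fst_eq hy (by omega) (by omega) (by omega)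
      ((hrow t (by omega)).trans (hrow (t + 2) ht).symm))
    hletter

lemma exists_crossesAt_le {l : ℕ} (hl : ∀ m, HasConstFactor u m → m ≤ l)
    (h : ∃ t < n, CrossesAt y t) : ∃ i < n, CrossesAt y i ∧ i ≤ l := by
  classical
  obtain ⟨hin, hi⟩ := Nat.find_spec h
  refine ⟨Nat.find h, hin, hi, ?_⟩
  have hrow : ∀ t ≤ Nat.find h, (y t).1 = (y 0).1 := fun t =>
    fst_eq_of_forall_not_crossesAt (fun s _ hs hcross => Nat.find_min h hs ⟨by omega, hcross⟩)
      (Nat.zero_le t)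
  generalize Nat.find h = i at hin hi hrow
  obtain _ | d := i
  · exact Nat.zero_le l
  have hletter : ∀ t ≤ d, u (y t).2 = u (y (d + 2)).2 := fun t ht =>
    letter_eq_of_fst_ne hy (by omega) hin
      (by rw [hrow t (by omega), ← hrow (d + 1) le_rfl]; exact hi)
  exact hl _ (hasConstFactor_of_initial_run hy (by omega) (fun t ht => hrow t (by omega))
    fun t ht => (hletter t ht).trans (hletter 0 (Nat.zero_le d)).symm)

lemma exists_crossesAt_ge {l : ℕ} (hl : ∀ m, HasConstFactor u m → m ≤ l)
    (h : ∃ t < n, CrossesAt y t) : ∃ j < n, CrossesAt y j ∧ n ≤ j + 1 + l := by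
  obtain ⟨t, htn, ht⟩ := h
  obtain ⟨i, hin, hi, hil⟩ := exists_crossesAt_le (y := fun s => y (n - s)) hy.reverse hl
    ⟨n - 1 - t, by omega, (crossesAt_reverse_iff (by omega)).mpr
      (by rwa [show n - 1 - (n - 1 - t) = t by omega])⟩
  exact ⟨n - 1 - i, by omega, (crossesAt_reverse_iff hin).mp hi, by omega⟩

lemma not_crossesAt_of_fst_eq {t s : ℕ} (ht : CrossesAt y t) (hts : t + 3 ≤ s) (hsn : s < n)
    (h2 : (y (t + 2)).1 = (y (t + 1)).1) (hs : (y s).1 = (y (t + 1)).1) : ¬CrossesAt y s := by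
  intro hcross
  have e1 : u (y t).2 = u (y (t + 2)).2 :=
    letter_eq_of_fst_ne hy le_rfl (by omega) (by rwa [h2])
  have e2 : u (y (t + 2)).2 = u (y (s + 1)).2 :=
    letter_eq_of_fst_ne hy (by omega) hsn (by rwa [h2, ← hs])
  have e3 : u (y t).2 = u (y s).2 :=
    letter_eq_of_fst_ne hy (by omega) hsn.le (by rwa [hs])
  exact letter_ne_of_crossesAt hy hsn hcross (e3.symm.trans (e1.trans e2))

/-- A vertex at distance `≥ 2` from `y t, …, y (t+3)` shares its letter with every one of them in
another component; with crossings at `t` and `t + 2` no component and letter are left for it. -/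
lemma le_five_of_crossesAt_of_crossesAt_add_two {t : ℕ} (ht : CrossesAt y t)
    (ht2 : CrossesAt y (t + 2)) (htn : t + 3 ≤ n) : n ≤ 5 := by
  by_contra! hn
  obtain ⟨w, hwn, hw⟩ : ∃ w ≤ n, w + 2 ≤ t ∨ t + 5 ≤ w :=
    if h : 2 ≤ t then ⟨0, by omega, by omega⟩ else ⟨n, le_rfl, by omega⟩
  have far : ∀ k, t ≤ k → k ≤ t + 3 → (y w).1 ≠ (y k).1 → u (y w).2 = u (y k).2 := by
    intro k hk hk' hne
    rcases hw with hw | hw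
    · exact letter_eq_of_fst_ne hy (by omega) (by omega) hne
    · exact (letter_eq_of_fst_ne hy (by omega) hwn (Ne.symm hne)).symm
  have f0 := far t le_rfl (by omega)
  have f1 := far (t + 1) (by omega) (by omega)
  have f2 := far (t + 2) (by omega) (by omega)
  have f3 := far (t + 3) (by omega) le_rfl
  have c0 := letter_ne_of_crossesAt hy (by omega) ht
  have c1 := letter_ne_of_crossesAt hy (t := t + 1) (by omega)
  have c2 := letter_ne_of_crossesAt hy (by omega) ht2
  have e02 := letter_eq_of_fst_ne hy (j := t) (k := t + 2) le_rfl (by omega)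
  have e13 := letter_eq_of_fst_ne hy (j := t + 1) (k := t + 3) le_rfl (by omega)
  have e03 := letter_eq_of_fst_ne hy (j := t) (k := t + 3) (by omega) (by omega)
  unfold CrossesAt at ht ht2 c1
  generalize u (y w).2 = bw at *
  generalize u (y t).2 = b0 at *
  generalize u (y (t + 1)).2 = b1 at *
  generalize u (y (t + 2)).2 = b2 at *
  generalize u (y (t + 3)).2 = b3 at *
  cases bw <;> cases b0 <;> cases b1 <;> cases b2 <;> cases b3 <;> grind

lemma crossesAt_succ_of_lt (hn : 6 ≤ n) {t s : ℕ} (ht : CrossesAt y t) (hs : CrossesAt y s)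
    (hts : t < s) (hsn : s < n) : CrossesAt y (t + 1) := by
  classical
  have h : ∃ k, t < k ∧ k ≤ s ∧ CrossesAt y k := ⟨s, hts, le_rfl, hs⟩
  obtain ⟨htk, hks, hk⟩ := Nat.find_spec h
  have hrow : ∀ j, t + 1 ≤ j → j ≤ Nat.find h → (y j).1 = (y (t + 1)).1 := fun j =>
    fst_eq_of_forall_not_crossesAt fun m hm hmk hcross =>
      Nat.find_min h hmk ⟨by omega, by omega, hcross⟩
  generalize Nat.find h = k at htk hks hk hrow
  obtain rfl | rfl | hk3 : k = t + 1 ∨ k = t + 2 ∨ t + 3 ≤ k := by omega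
  · exact hk
  · have := le_five_of_crossesAt_of_crossesAt_add_two hy ht hk (by omega)
    omega
  · exact absurd hk (not_crossesAt_of_fst_eq hy ht hk3 (by omega)
      (hrow _ (by omega) (by omega)) (hrow k (by omega) le_rfl))

theorem fst_eq_fst_zero {l : ℕ} (hl : ∀ m, HasConstFactor u m → m ≤ l) (hn6 : 6 ≤ n)
    (hnl : 2 * l + 3 ≤ n) : ∀ j ≤ n, (y j).1 = (y 0).1 := fun j hj => by
  refine fst_eq_of_forall_not_crossesAt (fun t _ htj hcross => ?_) (Nat.zero_le j) hj
  obtain ⟨i, -, hi, hil⟩ := exists_crossesAt_le hy hl ⟨t, by omega, hcross⟩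
  obtain ⟨k, hkn, hk, hkl⟩ := exists_crossesAt_ge hy hl ⟨t, by omega, hcross⟩
  have hi1 := crossesAt_succ_of_lt hy hn6 hi hk (by omega) hkn
  have hi2 := crossesAt_succ_of_lt hy hn6 hi1 hk (by omega) hkn
  have := le_five_of_crossesAt_of_crossesAt_add_two hy hi hi2 (by omega)
  omega

end GhatXor

theorem long_induced_path_in_GhatXor_in_one_component_general
    (u : ℕ → Bool)
    (l : ℕ) (hlmax : ∀ m, HasConstFactor u m → m ≤ l)
    {n : ℕ} (hn : (if l = 1 then 6 else 2 * (l + 1) + 1) ≤ n)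
    (x : Fin (n + 1) → ℕ × ℕ) (hx : IsInducedPath (GhatXor u) x) :
    ∀ i j : Fin (n + 1), (x i).1 = (x j).1 := by
  have hl1 : 1 ≤ l := hlmax 1 ⟨0, by simp⟩
  have hclamp : x = fun i : Fin (n + 1) => x (Fin.clamp i n) :=
    funext fun i => congrArg x (Fin.ext (by simp [Fin.clamp]; omega))
  rw [hclamp] at hx
  have hfst := GhatXor.fst_eq_fst_zero (y := fun t => x (Fin.clamp t n)) hx hlmax
    (by split_ifs at hn <;> omega) (by split_ifs at hn <;> omega)
  intro i j
  rw [hclamp]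
  exact (hfst i i.is_le).trans (hfst j j.is_le).symm

theorem long_induced_path_in_GhatXor_in_one_component
    (u : ℕ → Bool) (hur : UniformlyRecurrent u) (hnc : ∃ m n : ℕ, u m ≠ u n)
    (l : ℕ) (hl : HasConstFactor u l) (hlmax : ∀ m, HasConstFactor u m → m ≤ l)
    {n : ℕ} (hn : (if l = 1 then 6 else 2 * (l + 1) + 1) ≤ n)
    (x : Fin (n + 1) → ℕ × ℕ) (hx : IsInducedPath (GhatXor u) x) :
    ∀ i j : Fin (n + 1), (x i).1 = (x j).1 :=
  long_induced_path_in_GhatXor_in_one_component_general u l hlmax hn x hx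
end

section
/- Let u, u' : ℕ → {0,1} be uniformly recurrent non-constant words whose factor sets are nonequivalent, i.e., fac(u) is not equal to any of fac(u'), fac(u')^d, fac(u') ∔ 1, and (fac(u'))^d ∔ 1. Then the ages of the graphs Ĝ_{u,⊕} and Ĝ_{u',⊕} are incomparable with respect to inclusion (neither is contained in the other), and likewise the ages of Ĝ_{u,π₂} and Ĝ_{u',π₂} are incomparable with respect to inclusion. -/
open SimpleGraph

/-!
If `fac u ≠ σ (fac u')` for each of the four symmetries `σ` (identity, reversal, complement and
both), uniform recurrence packs four witnesses into one long factor `w` of `u` such that no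
`σ w` is a factor of `u'`. The two-row "ladder" of `Ĝ_u` over `w` is a finite induced subgraph
of `Ĝ_u`. In `Ĝ_{u'}` a long induced path must run straight along one row: a window of it that
leaves its row or turns back would force a long constant factor of `u'`, which a non-constant
uniformly recurrent word does not have. So an embedding of the ladder sends its rows to straight
segments, and the edges between them make one of the two segments spell some `σ w`.
-/

section Factors

variable {A : Type*}

def factorAt (u : ℕ → A) (p n : ℕ) : List A := (List.range n).map fun i => u (p + i)

@[simp] lemma length_factorAt (u : ℕ → A) (p n : ℕ) : (factorAt u p n).length = n := by
  simp [factorAt]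

@[simp] lemma getElem_factorAt (u : ℕ → A) (p n i : ℕ) (h : i < (factorAt u p n).length) :
    (factorAt u p n)[i] = u (p + i) := by
  simp [factorAt]

lemma isFactor_factorAt (u : ℕ → A) (p n : ℕ) : IsFactor u (factorAt u p n) :=
  ⟨p, by rw [length_factorAt]; rfl⟩

lemma factorAt_prefix (u : ℕ → A) (p : ℕ) {n n' : ℕ} (h : n ≤ n') :
    factorAt u p n <+: factorAt u p n' := by
  have : (factorAt u p n').take n = factorAt u p n := by
    simp [factorAt, ← List.map_take, List.take_range, min_eq_left h]
  exact this ▸ List.take_prefix _ _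

lemma IsFactor.of_infix {u : ℕ → A} {v w : List A} (hw : IsFactor u w) (hvw : v <:+: w) :
    IsFactor u v := by
  obtain ⟨p, hp⟩ := hw
  obtain ⟨s, t, rfl⟩ := hvw
  refine ⟨p + s.length, List.ext_getElem (by simp) fun i hi _ => ?_⟩
  have hi' : s.length + i < (s ++ v ++ t).length := by simp; omega
  calc v[i] = (s ++ v ++ t)[s.length + i] := by simp [hi]
    _ = u (p + s.length + i) := by rw [List.getElem_of_eq hp hi']; simp [Nat.add_assoc]
    _ = _ := by simp

lemma UniformlyRecurrent.exists_factorAt_infix {u : ℕ → A} (hu : UniformlyRecurrent u)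
    (K : ℕ) : ∃ n, K ≤ n ∧ ∀ w, IsFactor u w → w.length ≤ K → w <:+: factorAt u 0 n := by
  obtain ⟨n, hn⟩ := hu K
  have hK : ∀ p, factorAt u p K <:+: factorAt u 0 n := fun p =>
    hn _ _ (isFactor_factorAt u p K) (isFactor_factorAt u 0 n) (length_factorAt ..)
      (length_factorAt ..)
  refine ⟨n, by simpa using (hK 0).length_le, fun w ⟨p, hp⟩ hw => ?_⟩
  have hpre : w <+: factorAt u p K := by
    rw [hp]
    exact factorAt_prefix u p hw
  exact hpre.isInfix.trans (hK p)

end Factors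

section ConstFactors

variable {u : ℕ → Bool} {m : ℕ}

lemma HasConstFactor.mono {m' : ℕ} (h : HasConstFactor u m') (hm : m ≤ m') :
    HasConstFactor u m :=
  let ⟨p, hp⟩ := h
  ⟨p, fun i hi => hp i (by omega)⟩

lemma exists_lt_eq_of_not_hasConstFactor (h : ¬ HasConstFactor u m) (p : ℕ) (b : Bool) :
    ∃ i < m, u (p + i) = b := by
  by_contra! hne
  refine h ⟨p, fun i hi => ?_⟩
  have h₀ := hne 0 (by omega)
  rw [Nat.add_zero] at h₀
  have hᵢ := hne i hi
  revert h₀ hᵢ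
  cases u (p + i) <;> cases u p <;> cases b <;> simp

lemma exists_three_lt_eq_of_not_hasConstFactor (h : ¬ HasConstFactor u m) {n : ℕ}
    (hn : 3 * m ≤ n) (b : Bool) :
    ∃ y₁ y₂ y₃, y₁ < y₂ ∧ y₂ < y₃ ∧ y₃ < n ∧ u y₁ = b ∧ u y₂ = b ∧ u y₃ = b := by
  obtain ⟨i₁, hi₁, h₁⟩ := exists_lt_eq_of_not_hasConstFactor h 0 b
  obtain ⟨i₂, hi₂, h₂⟩ := exists_lt_eq_of_not_hasConstFactor h m b
  obtain ⟨i₃, hi₃, h₃⟩ := exists_lt_eq_of_not_hasConstFactor h (2 * m) b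
  exact ⟨0 + i₁, m + i₂, 2 * m + i₃, by omega, by omega, by omega, h₁, h₂, h₃⟩

lemma UniformlyRecurrent.exists_not_hasConstFactor (hu : UniformlyRecurrent u)
    (hnc : ∃ a b : ℕ, u a ≠ u b) (K : ℕ) : ∃ m, K ≤ m ∧ ¬ HasConstFactor u m := by
  obtain ⟨m, hm⟩ := hu 1
  refine ⟨max m K, le_max_right _ _, fun h => ?_⟩
  obtain ⟨p, hp⟩ := h.mono (le_max_left _ _)
  have hconst : ∀ x, u x = u p := fun x => by
    have hx : u x ∈ factorAt u p m :=
      (hm [u x] _ ⟨x, by simp⟩ (isFactor_factorAt u p m) rfl (length_factorAt ..)).subset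
        (List.mem_singleton_self _)
    obtain ⟨i, hi, hxi⟩ : ∃ i < m, u (p + i) = u x := by simpa [factorAt] using hx
    rw [← hxi, hp i hi]
  obtain ⟨a, b, hab⟩ := hnc
  exact hab ((hconst a).trans (hconst b).symm)

end ConstFactors

section Symmetries

/-- The symmetries `w ↦ w, wᵈ, w ∔ 1, wᵈ ∔ 1` of binary words: reverse when `r`,
complement when `c`. -/
def wordSymm (r c : Bool) (w : List Bool) : List Bool :=
  (if r then w.reverse else w).map fun b => xor c b

lemma wordSymm_involutive (r c : Bool) : Function.Involutive (wordSymm r c) := by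
  intro w
  cases r <;> cases c <;> simp [wordSymm, List.map_reverse, Function.comp_def]

@[simp] lemma length_wordSymm (r c : Bool) (w : List Bool) :
    (wordSymm r c w).length = w.length := by
  cases r <;> simp [wordSymm]

lemma List.IsInfix.wordSymm {v w : List Bool} (h : v <:+: w) (r c : Bool) :
    _root_.wordSymm r c v <:+: _root_.wordSymm r c w := by
  cases r
  · exact h.map _
  · exact (List.reverse_infix.mpr h).map _

lemma exists_isFactor_not_isFactor_of_ne {A : Type*} {u u' : ℕ → A} {op : List A → List A}
    (hu' : UniformlyRecurrent u') (hop : Function.Involutive op)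
    (hlen : ∀ w, (op w).length = w.length) (hinf : ∀ ⦃v w⦄, v <:+: w → op v <:+: op w)
    (h : {w | IsFactor u w} ≠ op '' {w | IsFactor u' w}) :
    ∃ w, IsFactor u w ∧ ¬ IsFactor u' (op w) := by
  by_contra! hall
  refine h (Set.ext fun w => ⟨fun hw => ⟨op w, hall w hw, hop w⟩, ?_⟩)
  rintro ⟨w', hw', rfl⟩
  obtain ⟨m, hm⟩ := hu' w'.length
  have : w' <:+: op (factorAt u 0 m) :=
    hm _ _ hw' (hall _ (isFactor_factorAt u 0 m)) rfl (by rw [hlen, length_factorAt])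
  exact (isFactor_factorAt u 0 m).of_infix (hop (factorAt u 0 m) ▸ hinf this)

/-- All four forbidden words fit into one long enough factor, by uniform recurrence. -/
lemma exists_factorAt_forall_not_isFactor_wordSymm {u u' : ℕ → Bool}
    (hu : UniformlyRecurrent u) (hu' : UniformlyRecurrent u')
    (hne : ∀ r c, {w | IsFactor u w} ≠ wordSymm r c '' {w | IsFactor u' w}) (K : ℕ) :
    ∃ n, K ≤ n ∧ ∀ r c, ¬ IsFactor u' (wordSymm r c (factorAt u 0 n)) := by
  choose w hw hw' using fun r c => exists_isFactor_not_isFactor_of_ne hu'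
    (wordSymm_involutive r c) (length_wordSymm r c) (fun _ _ h => h.wordSymm r c) (hne r c)
  obtain ⟨n, hn, hinf⟩ := hu.exists_factorAt_infix (K + (w false false).length +
    (w false true).length + (w true false).length + (w true true).length)
  refine ⟨n, by omega, fun r c h => hw' r c (h.of_infix ((hinf _ (hw r c) ?_).wordSymm r c))⟩
  cases r <;> cases c <;> omega

end Symmetries

section Sequences

lemma eq_add_or_add_eq_of_dist_eq_one {c : ℕ → ℕ} {n : ℕ} (hinj : Set.InjOn c (Set.Iio n))
    (hstep : ∀ i, i + 1 < n → Nat.dist (c i) (c (i + 1)) = 1) :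
    (∀ i < n, c i = c 0 + i) ∨ ∀ i < n, c i + i = c 0 := by
  have hturn : ∀ i, i + 2 < n → (c (i + 1) = c i + 1 ↔ c (i + 2) = c (i + 1) + 1) := by
    intro i hi
    have h₁ := hstep i (by omega)
    have h₂ : Nat.dist (c (i + 1)) (c (i + 2)) = 1 := hstep (i + 1) hi
    have hne : c i ≠ c (i + 2) := fun h => by
      have := hinj (show i < n by omega) (show i + 2 < n from hi) h
      omega
    unfold Nat.dist at h₁ h₂
    omega
  rcases Nat.lt_or_ge n 2 with hn | hn
  · left
    intro i hi
    obtain rfl : i = 0 := by omega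
    rfl
  have h₀ : Nat.dist (c 0) (c 1) = 1 := hstep 0 (by omega)
  unfold Nat.dist at h₀
  by_cases hup : c 1 = c 0 + 1
  · have hsucc : ∀ i, i + 1 < n → c (i + 1) = c i + 1 := by
      intro i
      induction i with
      | zero => exact fun _ => hup
      | succ k ih => exact fun hk => (hturn k hk).1 (ih (by omega))
    left
    intro i hi
    induction i with
    | zero => rfl
    | succ k ih => rw [hsucc k hi, ih (by omega)]; rfl
  · have hpred : ∀ i, i + 1 < n → c i = c (i + 1) + 1 := by
      intro i
      induction i with
      | zero => exact fun _ => show c 0 = c 1 + 1 by omega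
      | succ k ih =>
        intro hk
        show c (k + 1) = c (k + 2) + 1
        have := hturn k hk
        have : Nat.dist (c (k + 1)) (c (k + 2)) = 1 := hstep (k + 1) hk
        have := ih (by omega)
        unfold Nat.dist at *
        omega
    right
    intro i hi
    induction i with
    | zero => rfl
    | succ k ih =>
      have := hpred k hi
      have := ih (by omega)
      omega

lemma exists_far_of_forall_window {f : ℕ → Bool} {b : Bool} {m n : ℕ}
    (hwin : ∀ a, a + m ≤ n → ∃ i, a ≤ i ∧ i < a + m ∧ f i = b) (hn : 3 * m + 8 ≤ n)
    (e₁ e₂ : ℕ) : ∃ k < n, f k = b ∧ 2 ≤ Nat.dist k e₁ ∧ 2 ≤ Nat.dist k e₂ := by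
  wlog h : e₁ ≤ e₂ generalizing e₁ e₂
  · obtain ⟨k, hk, hkb, h₁, h₂⟩ := this e₂ e₁ (by omega)
    exact ⟨k, hk, hkb, h₂, h₁⟩
  obtain ⟨a, ha, hfar⟩ : ∃ a, a + m ≤ n ∧
      ∀ k, a ≤ k → k < a + m → 2 ≤ Nat.dist k e₁ ∧ 2 ≤ Nat.dist k e₂ := by
    unfold Nat.dist
    by_cases h₁ : m + 2 ≤ e₁
    · exact ⟨0, by omega, fun k _ _ => by omega⟩
    by_cases h₂ : e₁ + m + 4 ≤ e₂
    · exact ⟨e₁ + 2, by omega, fun k _ _ => by omega⟩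
    · exact ⟨e₂ + 2, by omega, fun k _ _ => by omega⟩
  obtain ⟨k, hk₁, hk₂, hkb⟩ := hwin a ha
  exact ⟨k, by omega, hkb, hfar k hk₁ hk₂⟩

end Sequences

section RowGraphs

def RowsArePaths (G : SimpleGraph (ℕ × ℕ)) : Prop :=
  ∀ a b : ℕ × ℕ, a.1 = b.1 → (G.Adj a b ↔ Nat.dist a.2 b.2 = 1)

lemma rowsArePaths_ghatXor (v : ℕ → Bool) : RowsArePaths (GhatXor v) := fun a b h => by
  simp [GhatXor, h]

lemma rowsArePaths_ghatPi2 (v : ℕ → Bool) : RowsArePaths (GhatPi2 v) := fun a b h => by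
  simp [GhatPi2, h]

lemma ghatXor_adj_of_ne {v : ℕ → Bool} {a b : ℕ × ℕ} (h : a.1 ≠ b.1) :
    (GhatXor v).Adj a b ↔ v a.2 ≠ v b.2 := by
  simp [GhatXor, h]

lemma ghatPi2_adj_of_lt {v : ℕ → Bool} {a b : ℕ × ℕ} (h : a.1 < b.1) :
    (GhatPi2 v).Adj a b ↔ v b.2 = true := by
  simp [GhatPi2, h, h.ne, h.not_gt]

lemma RowsArePaths.eq_or_eq_of_adj {G : SimpleGraph (ℕ × ℕ)} (hG : RowsArePaths G)
    {x y₁ y₂ y₃ : ℕ × ℕ} (h₁ : x.1 = y₁.1) (h₂ : x.1 = y₂.1) (h₃ : x.1 = y₃.1)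
    (a₁ : G.Adj x y₁) (a₂ : G.Adj x y₂) (a₃ : G.Adj x y₃) :
    y₁ = y₂ ∨ y₁ = y₃ ∨ y₂ = y₃ := by
  have d₁ := (hG _ _ h₁).1 a₁
  have d₂ := (hG _ _ h₂).1 a₂
  have d₃ := (hG _ _ h₃).1 a₃
  unfold Nat.dist at d₁ d₂ d₃
  have : y₁.2 = y₂.2 ∨ y₁.2 = y₃.2 ∨ y₂.2 = y₃.2 := by omega
  rcases this with h | h | h
  · exact Or.inl (Prod.ext (h₁.symm.trans h₂) h)
  · exact Or.inr (Or.inl (Prod.ext (h₁.symm.trans h₃) h))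
  · exact Or.inr (Or.inr (Prod.ext (h₂.symm.trans h₃) h))

/-- An `ℕ`-indexed variant of `IsInducedPath`: only `z 0, …, z (n - 1)` matter. -/
structure IsInducedPathSeq {V : Type*} (G : SimpleGraph V) (n : ℕ) (z : ℕ → V) : Prop where
  injOn : Set.InjOn z (Set.Iio n)
  adj_iff : ∀ i < n, ∀ j < n, G.Adj (z i) (z j) ↔ Nat.dist i j = 1

lemma IsInducedPathSeq.shift {V : Type*} {G : SimpleGraph V} {n : ℕ} {z : ℕ → V}
    (hz : IsInducedPathSeq G n z) {a m : ℕ} (h : a + m ≤ n) :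
    IsInducedPathSeq G m fun i => z (a + i) where
  injOn i hi j hj hij := by
    have := hz.injOn (show a + i < n by simp at hi; omega) (show a + j < n by simp at hj; omega) hij
    omega
  adj_iff i hi j hj := by
    rw [hz.adj_iff _ (by omega) _ (by omega)]
    unfold Nat.dist
    omega

def IsStraight (n : ℕ) (z : ℕ → ℕ × ℕ) : Prop :=
  ∃ R c, (∀ i < n, z i = (R, c + i)) ∨ ∀ i < n, z i = (R, c + (n - 1 - i))

lemma IsStraight.fst_eq {n : ℕ} {z : ℕ → ℕ × ℕ} (hz : IsStraight n z) {i j : ℕ} (hi : i < n)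
    (hj : j < n) : (z i).1 = (z j).1 := by
  obtain ⟨R, c, h | h⟩ := hz <;> simp [h i hi, h j hj]

lemma IsInducedPathSeq.isStraight {G : SimpleGraph (ℕ × ℕ)} (hG : RowsArePaths G) {n : ℕ}
    {z : ℕ → ℕ × ℕ} (hz : IsInducedPathSeq G n z)
    (hrow : ∀ i, i + 1 < n → (z i).1 = (z (i + 1)).1) : IsStraight n z := by
  have hrow₀ : ∀ i < n, (z i).1 = (z 0).1 := by
    intro i
    induction i with
    | zero => exact fun _ => rfl
    | succ k ih => exact fun hk => (hrow k hk).symm.trans (ih (by omega))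
  have hcol : Set.InjOn (fun i => (z i).2) (Set.Iio n) := fun i hi j hj h =>
    hz.injOn hi hj (Prod.ext ((hrow₀ i hi).trans (hrow₀ j hj).symm) h)
  have hstep : ∀ i, i + 1 < n → Nat.dist (z i).2 (z (i + 1)).2 = 1 := fun i hi =>
    (hG _ _ (hrow i hi)).1 ((hz.adj_iff i (by omega) (i + 1) hi).2 (by unfold Nat.dist; omega))
  rcases eq_add_or_add_eq_of_dist_eq_one hcol hstep with h | h
  · exact ⟨(z 0).1, (z 0).2, Or.inl fun i hi => Prod.ext (hrow₀ i hi) (h i hi)⟩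
  · refine ⟨(z 0).1, (z 0).2 - (n - 1), Or.inr fun i hi => Prod.ext (hrow₀ i hi) ?_⟩
    have := h i hi
    have := h (n - 1) (by omega)
    dsimp only at *
    omega

lemma IsStraight.isFactor {n : ℕ} {z : ℕ → ℕ × ℕ} (hz : IsStraight n z) {v W : ℕ → Bool}
    (hW : ∀ i < n, v (z i).2 = W i) :
    IsFactor v ((List.range n).map W) ∨ IsFactor v ((List.range n).map W).reverse := by
  obtain ⟨R, c, h | h⟩ := hz
  · refine Or.inl ⟨c, List.ext_getElem (by simp) fun i hi _ => ?_⟩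
    simp only [List.length_map, List.length_range] at hi
    simp [← hW i hi, h i hi]
  · refine Or.inr ⟨c, List.ext_getElem (by simp) fun i hi _ => ?_⟩
    simp only [List.length_reverse, List.length_map, List.length_range] at hi
    simp [List.getElem_reverse, ← hW (n - 1 - i) (by omega), h (n - 1 - i) (by omega)]
    congr 1
    omega

lemma IsStraight.hasConstFactor {n : ℕ} {z : ℕ → ℕ × ℕ} (hz : IsStraight n z) {v : ℕ → Bool}
    {b : Bool} (hb : ∀ i < n, v (z i).2 = b) : HasConstFactor v n := by
  have hrep : (List.range n).map (fun _ => b) = List.replicate n b := by simp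
  obtain ⟨p, hp⟩ : IsFactor v (List.replicate n b) := by
    simpa [hrep] using hz.isFactor (W := fun _ => b) hb
  have hpb : ∀ i < n, v (p + i) = b := fun i hi => by
    have := List.getElem_of_eq hp (i := i) (by simpa using hi)
    simp only [List.getElem_replicate, List.getElem_map, List.getElem_range] at this
    exact this.symm
  exact ⟨p, fun i hi => (hpb i hi).trans (by simpa using (hpb 0 (by omega)).symm)⟩

lemma IsStraight.exists_isFactor_wordSymm {n : ℕ} {z : ℕ → ℕ × ℕ} (hz : IsStraight n z)
    {u v : ℕ → Bool} {c : Bool} (h : ∀ i < n, v (z i).2 = xor c (u i)) :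
    ∃ r, IsFactor v (wordSymm r c (factorAt u 0 n)) := by
  have hw : wordSymm false c (factorAt u 0 n) = (List.range n).map fun i => xor c (u i) := by
    simp [wordSymm, factorAt]
  have hrev : wordSymm true c (factorAt u 0 n) = (wordSymm false c (factorAt u 0 n)).reverse := by
    simp [wordSymm, List.map_reverse]
  rcases hz.isFactor h with h | h
  · exact ⟨false, hw ▸ h⟩
  · exact ⟨true, hrev ▸ hw ▸ h⟩

end RowGraphs

section StraightPaths

variable {v : ℕ → Bool} {m n : ℕ} {z : ℕ → ℕ × ℕ}

/-- A window of `m` path vertices carrying the constant letter `!b` would, if it stayed in one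
row, spell a constant factor of length `m`. -/
lemma IsInducedPathSeq.exists_eq_of_window {G : SimpleGraph (ℕ × ℕ)} (hG : RowsArePaths G)
    (hz : IsInducedPathSeq G n z) (hv : ¬ HasConstFactor v m) {a : ℕ} (ha : a + m ≤ n)
    (b : Bool) (hrow : (∀ i, a ≤ i → i < a + m → v (z i).2 = !b) →
      ∀ i, a ≤ i → i + 1 < a + m → (z i).1 = (z (i + 1)).1) :
    ∃ i, a ≤ i ∧ i < a + m ∧ v (z i).2 = b := by
  by_contra! h
  have hconst : ∀ i, a ≤ i → i < a + m → v (z i).2 = !b := fun i h₁ h₂ =>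
    Bool.eq_not_of_ne (h i h₁ h₂)
  refine hv (((hz.shift ha).isStraight hG fun i hi => ?_).hasConstFactor (b := !b) fun i hi => ?_)
  · exact hrow hconst (a + i) (by omega) (by omega)
  · exact hconst (a + i) (by omega) (by omega)

lemma IsInducedPathSeq.isStraight_ghatXor (hv : ¬ HasConstFactor v m)
    (hz : IsInducedPathSeq (GhatXor v) n z) (hn : 3 * m + 8 ≤ n) : IsStraight n z := by
  have hfar : ∀ i < n, ∀ j < n, 2 ≤ Nat.dist i j → v (z i).2 ≠ v (z j).2 →
      (z i).1 = (z j).1 := by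
    intro i hi j hj hij hne
    by_contra hrow
    have := (hz.adj_iff i hi j hj).1 ((ghatXor_adj_of_ne hrow).2 hne)
    omega
  have hwin : ∀ b a, a + m ≤ n → ∃ i, a ≤ i ∧ i < a + m ∧ v (z i).2 = b := by
    intro b a ha
    refine hz.exists_eq_of_window (rowsArePaths_ghatXor v) hv ha b fun hconst i h₁ h₂ => ?_
    by_contra hrow
    have hadj := (hz.adj_iff i (by omega) (i + 1) (by omega)).2 (by unfold Nat.dist; omega)
    exact (ghatXor_adj_of_ne hrow).1 hadj
      (by rw [hconst i h₁ (by omega), hconst (i + 1) (by omega) h₂])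
  have hsel (b : Bool) (e₁ e₂ : ℕ) :=
    exists_far_of_forall_window (f := fun i => v (z i).2) (hwin b) hn e₁ e₂
  -- both share the row of a far vertex carrying the other letter
  have hsame : ∀ i < n, ∀ j < n, v (z i).2 = v (z j).2 → (z i).1 = (z j).1 := by
    intro i hi j hj hij
    obtain ⟨k, hk, hkb, hki, hkj⟩ := hsel (!v (z i).2) i j
    rw [hfar i hi k hk (by rwa [Nat.dist_comm]) (by simp [hkb]),
      hfar j hj k hk (by rwa [Nat.dist_comm]) (by simp [hkb, hij])]
  refine hz.isStraight (rowsArePaths_ghatXor v) fun i hi => ?_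
  by_cases hij : v (z i).2 = v (z (i + 1)).2
  · exact hsame i (by omega) (i + 1) hi hij
  · obtain ⟨k, hk, hkb, hk₁, -⟩ := hsel (v (z i).2) (i + 1) (i + 1)
    rw [hsame i (by omega) k hk hkb.symm, hfar k hk (i + 1) hi hk₁ (by rwa [hkb])]

lemma IsInducedPathSeq.isStraight_ghatPi2 (hv : ¬ HasConstFactor v m) (hm : 5 ≤ m)
    (hz : IsInducedPathSeq (GhatPi2 v) n z) (hn : 3 * m + 8 ≤ n) : IsStraight n z := by
  have hfar_le : ∀ i < n, ∀ j < n, 2 ≤ Nat.dist i j → v (z i).2 = true →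
      (z i).1 ≤ (z j).1 := by
    intro i hi j hj hij ht
    by_contra! hlt
    have := (hz.adj_iff j hj i hi).1 ((ghatPi2_adj_of_lt hlt).2 ht)
    rw [Nat.dist_comm] at this
    omega
  have hfar : ∀ i < n, ∀ j < n, 2 ≤ Nat.dist i j → v (z i).2 = true → v (z j).2 = true →
      (z i).1 = (z j).1 := fun i hi j hj hij hti htj =>
    le_antisymm (hfar_le i hi j hj hij hti) (hfar_le j hj i hi (by rwa [Nat.dist_comm]) htj)
  have hwin : ∀ b a, a + m ≤ n → ∃ i, a ≤ i ∧ i < a + m ∧ v (z i).2 = b := by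
    intro b a ha
    refine hz.exists_eq_of_window (rowsArePaths_ghatPi2 v) hv ha b fun hconst i h₁ h₂ => ?_
    cases b with
    | false =>
      -- two true vertices of the window lie in the row of a third one, far from both
      obtain ⟨k, hk₁, hk₂, hki, hki'⟩ : ∃ k, a ≤ k ∧ k < a + m ∧
          2 ≤ Nat.dist k i ∧ 2 ≤ Nat.dist k (i + 1) := by
        unfold Nat.dist
        by_cases h : a + 2 ≤ i
        · exact ⟨a, le_rfl, by omega, by omega, by omega⟩
        · exact ⟨a + m - 1, by omega, by omega, by omega, by omega⟩
      have htrue : ∀ j, a ≤ j → j < a + m → v (z j).2 = true := by simpa using hconst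
      rw [← hfar k (by omega) i (by omega) hki (htrue k hk₁ hk₂) (htrue i h₁ (by omega)),
        hfar k (by omega) (i + 1) (by omega) hki' (htrue k hk₁ hk₂) (htrue (i + 1) (by omega) h₂)]
    | true =>
      by_contra hne
      have hadj := (hz.adj_iff i (by omega) (i + 1) (by omega)).2 (by unfold Nat.dist; omega)
      rcases Nat.lt_or_gt_of_ne hne with hlt | hlt
      · simp [ghatPi2_adj_of_lt hlt, hconst (i + 1) (by omega) h₂] at hadj
      · simpa [ghatPi2_adj_of_lt hlt, hconst i h₁ (by omega)] using hadj.symm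
  have hsel (e₁ e₂ : ℕ) :=
    exists_far_of_forall_window (f := fun i => v (z i).2) (hwin true) hn e₁ e₂
  obtain ⟨t, ht, htb, -, -⟩ := hsel 0 0
  have htrue_row : ∀ i < n, v (z i).2 = true → (z i).1 = (z t).1 := by
    intro i hi hit
    obtain ⟨k, hk, hkb, hki, hkt⟩ := hsel i t
    rw [← hfar k hk i hi hki hkb hit, hfar k hk t ht hkt hkb htb]
  have hge : ∀ j < n, (z t).1 ≤ (z j).1 := by
    intro j hj
    obtain ⟨k, hk, hkb, hkj, -⟩ := hsel j j
    exact htrue_row k hk hkb ▸ hfar_le k hk j hj hkj hkb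
  refine hz.isStraight (rowsArePaths_ghatPi2 v) fun i hi => ?_
  -- the upper end of a cross-row edge carries the letter `true`, so lies in the lowest row
  by_contra hne
  have hadj := (hz.adj_iff i (by omega) (i + 1) hi).2 (by unfold Nat.dist; omega)
  rcases Nat.lt_or_gt_of_ne hne with hlt | hlt
  · have := htrue_row (i + 1) hi ((ghatPi2_adj_of_lt hlt).1 hadj)
    have := hge i (by omega)
    omega
  · have := htrue_row i (by omega) ((ghatPi2_adj_of_lt hlt).1 hadj.symm)
    have := hge (i + 1) hi
    omega

end StraightPaths

section Ladders

lemma AgeSubset.nonempty_embedding {V W α : Type*} {G : SimpleGraph V} {H : SimpleGraph W}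
    (h : AgeSubset G H) [Finite α] {F : SimpleGraph α} (f : F ↪g G) : Nonempty (F ↪g H) := by
  obtain ⟨k, ⟨e⟩⟩ := Finite.exists_equiv_fin α
  let ι := Iso.comap e.symm F
  obtain ⟨g⟩ := h k _ ⟨f.comp ι.toEmbedding⟩
  exact ⟨g.comp ι.symm.toEmbedding⟩

def ladder (n : ℕ) : Fin 2 × Fin n ↪ ℕ × ℕ :=
  ⟨Prod.map Fin.val Fin.val, Fin.val_injective.prodMap Fin.val_injective⟩

/-- Junk value `0` for `i ≥ n`. -/
def ladderRow {n : ℕ} (φ : Fin 2 × Fin n → ℕ × ℕ) (r : Fin 2) (i : ℕ) : ℕ × ℕ :=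
  if h : i < n then φ (r, ⟨i, h⟩) else 0

variable {G H : SimpleGraph (ℕ × ℕ)} {n : ℕ}

lemma adj_ladderRow_iff (φ : G.comap (ladder n) ↪g H) {r s : Fin 2} {i j : ℕ} (hi : i < n)
    (hj : j < n) : H.Adj (ladderRow φ r i) (ladderRow φ s j) ↔ G.Adj (r, i) (s, j) := by
  simp only [ladderRow, dif_pos hi, dif_pos hj, φ.map_adj_iff]
  rfl

lemma isInducedPathSeq_ladderRow (hG : RowsArePaths G) (φ : G.comap (ladder n) ↪g H)
    (r : Fin 2) : IsInducedPathSeq H n (ladderRow φ r) where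
  injOn i hi j hj h := by
    simp only [ladderRow, dif_pos (show i < n from hi), dif_pos (show j < n from hj)] at h
    simpa using φ.injective h
  adj_iff i hi j hj := (adj_ladderRow_iff φ hi hj).trans (hG _ _ rfl)

end Ladders

section Decoding

variable {u u' : ℕ → Bool} {m m' n : ℕ}

lemma exists_isFactor_wordSymm_of_ghatXor_ladder (hu : ¬ HasConstFactor u m)
    (hu' : ¬ HasConstFactor u' m') (hn : 3 * m ≤ n) (hn' : 3 * m' + 8 ≤ n)
    (φ : (GhatXor u).comap (ladder n) ↪g GhatXor u') :
    ∃ r c, IsFactor u' (wordSymm r c (factorAt u 0 n)) := by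
  set z := ladderRow φ
  have hz (r : Fin 2) := isInducedPathSeq_ladderRow (rowsArePaths_ghatXor u) φ r
  have hS (r : Fin 2) := (hz r).isStraight_ghatXor hu' hn'
  have hcross : ∀ x < n, ∀ y < n, (GhatXor u').Adj (z 0 x) (z 1 y) ↔ u x ≠ u y :=
    fun x hx y hy => (adj_ladderRow_iff φ hx hy).trans (ghatXor_adj_of_ne (by simp))
  have hn₀ : 0 < n := by omega
  have hrows : (z 0 0).1 ≠ (z 1 0).1 := by
    intro hR
    obtain ⟨y₁, y₂, y₃, h₁₂, h₂₃, h₃, hb₁, hb₂, hb₃⟩ :=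
      exists_three_lt_eq_of_not_hasConstFactor hu hn (!u 0)
    have hrow (y : ℕ) (hy : y < n) : (z 0 0).1 = (z 1 y).1 := hR.trans ((hS 1).fst_eq hn₀ hy)
    have hadj (y : ℕ) (hy : y < n) (hb : u y = !u 0) : (GhatXor u').Adj (z 0 0) (z 1 y) :=
      (hcross 0 hn₀ y hy).2 (by simp [hb])
    rcases (rowsArePaths_ghatXor u').eq_or_eq_of_adj (hrow y₁ (by omega)) (hrow y₂ (by omega))
      (hrow y₃ h₃) (hadj y₁ (by omega) hb₁) (hadj y₂ (by omega) hb₂) (hadj y₃ h₃ hb₃)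
      with h | h | h <;> have := (hz 1).injOn (by simp; omega) (by simp; omega) h <;> omega
  have hletters : ∀ x < n, u' (z 0 x).2 = xor (xor (u 0) (u' (z 1 0).2)) (u x) := by
    intro x hx
    have hx : (u' (z 0 x).2 ≠ u' (z 1 0).2 ↔ u x ≠ u 0) :=
      (ghatXor_adj_of_ne (((hS 0).fst_eq hx hn₀).trans_ne hrows)).symm.trans (hcross x hx 0 hn₀)
    revert hx
    cases u' (z 0 x).2 <;> cases u' (z 1 0).2 <;> cases u x <;> cases u 0 <;> decide
  obtain ⟨r, h⟩ := (hS 0).exists_isFactor_wordSymm hletters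
  exact ⟨r, _, h⟩

lemma exists_isFactor_wordSymm_of_ghatPi2_ladder (hu : ¬ HasConstFactor u m)
    (hu' : ¬ HasConstFactor u' m') (hm' : 5 ≤ m') (hn : m ≤ n) (hn' : 3 * m' + 8 ≤ n)
    (φ : (GhatPi2 u).comap (ladder n) ↪g GhatPi2 u') :
    ∃ r, IsFactor u' (wordSymm r false (factorAt u 0 n)) := by
  set z := ladderRow φ
  have hz (r : Fin 2) := isInducedPathSeq_ladderRow (rowsArePaths_ghatPi2 u) φ r
  have hS (r : Fin 2) := (hz r).isStraight_ghatPi2 hu' hm' hn'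
  have hcross : ∀ x < n, ∀ y < n, (GhatPi2 u').Adj (z 0 x) (z 1 y) ↔ u y = true :=
    fun x hx y hy => (adj_ladderRow_iff φ hx hy).trans (ghatPi2_adj_of_lt (by simp))
  have hn₀ : 0 < n := by omega
  obtain ⟨t, ht, htb⟩ := exists_lt_eq_of_not_hasConstFactor hu 0 true
  obtain ⟨f, hf, hfb⟩ := exists_lt_eq_of_not_hasConstFactor hu 0 false
  rw [Nat.zero_add] at htb hfb
  rcases lt_trichotomy (z 0 0).1 (z 1 0).1 with hlt | heq | hgt
  · refine (hS 1).exists_isFactor_wordSymm fun y hy => ?_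
    have hlt' : (z 0 0).1 < (z 1 y).1 := hlt.trans_eq ((hS 1).fst_eq hn₀ hy)
    rw [Bool.false_xor, Bool.eq_iff_iff]
    exact (ghatPi2_adj_of_lt hlt').symm.trans (hcross 0 hn₀ y hy)
  · -- `z 1 t` would have three neighbours `z 0 0`, `z 0 1`, `z 0 2` in its own row
    have hrow (x : ℕ) (hx : x < n) : (z 1 t).1 = (z 0 x).1 :=
      ((hS 1).fst_eq (by omega) hn₀).trans (heq.symm.trans ((hS 0).fst_eq hn₀ hx))
    have hadj (x : ℕ) (hx : x < n) : (GhatPi2 u').Adj (z 1 t) (z 0 x) :=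
      ((hcross x hx t (by omega)).2 htb).symm
    rcases (rowsArePaths_ghatPi2 u').eq_or_eq_of_adj (hrow 0 hn₀) (hrow 1 (by omega))
      (hrow 2 (by omega)) (hadj 0 hn₀) (hadj 1 (by omega)) (hadj 2 (by omega))
      with h | h | h <;> have := (hz 0).injOn (by simp; omega) (by simp; omega) h <;> omega
  · -- adjacency from row `0` to row `1` would only depend on the letter of `z 0 0`
    have hletter (y : ℕ) (hy : y < n) : u y = true ↔ u' (z 0 0).2 = true :=
      (hcross 0 hn₀ y hy).symm.trans
        ((adj_comm _ _ _).trans (ghatPi2_adj_of_lt (((hS 1).fst_eq hy hn₀).trans_lt hgt)))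
    simpa [hfb] using (hletter f (by omega)).2 ((hletter t (by omega)).1 htb)

end Decoding

section Ages

variable {u u' : ℕ → Bool}

lemma not_ageSubset_ghatXor (hu : UniformlyRecurrent u) (hu' : UniformlyRecurrent u')
    (hnc : ∃ a b : ℕ, u a ≠ u b) (hnc' : ∃ a b : ℕ, u' a ≠ u' b)
    (hne : ∀ r c, {w | IsFactor u w} ≠ wordSymm r c '' {w | IsFactor u' w}) :
    ¬ AgeSubset (GhatXor u) (GhatXor u') := by
  obtain ⟨m, -, hm⟩ := hu.exists_not_hasConstFactor hnc 0
  obtain ⟨m', -, hm'⟩ := hu'.exists_not_hasConstFactor hnc' 0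
  obtain ⟨n, hn, hbad⟩ :=
    exists_factorAt_forall_not_isFactor_wordSymm hu hu' hne (3 * m + 3 * m' + 8)
  intro hsub
  obtain ⟨φ⟩ := hsub.nonempty_embedding (Embedding.comap (ladder n) (GhatXor u))
  obtain ⟨r, c, h⟩ := exists_isFactor_wordSymm_of_ghatXor_ladder hm hm' (by omega) (by omega) φ
  exact hbad r c h

lemma not_ageSubset_ghatPi2 (hu : UniformlyRecurrent u) (hu' : UniformlyRecurrent u')
    (hnc : ∃ a b : ℕ, u a ≠ u b) (hnc' : ∃ a b : ℕ, u' a ≠ u' b)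
    (hne : ∀ r c, {w | IsFactor u w} ≠ wordSymm r c '' {w | IsFactor u' w}) :
    ¬ AgeSubset (GhatPi2 u) (GhatPi2 u') := by
  obtain ⟨m, -, hm⟩ := hu.exists_not_hasConstFactor hnc 0
  obtain ⟨m', hm'₅, hm'⟩ := hu'.exists_not_hasConstFactor hnc' 5
  obtain ⟨n, hn, hbad⟩ :=
    exists_factorAt_forall_not_isFactor_wordSymm hu hu' hne (m + 3 * m' + 8)
  intro hsub
  obtain ⟨φ⟩ := hsub.nonempty_embedding (Embedding.comap (ladder n) (GhatPi2 u))
  obtain ⟨r, h⟩ := exists_isFactor_wordSymm_of_ghatPi2_ladder hm hm' hm'₅ (by omega) (by omega) φ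
  exact hbad r false h

end Ages

theorem nonequivalent_factor_sets_give_incomparable_ages
    (u u' : ℕ → Bool) (hur : UniformlyRecurrent u) (hur' : UniformlyRecurrent u')
    (hnc : ∃ m n : ℕ, u m ≠ u n) (hnc' : ∃ m n : ℕ, u' m ≠ u' n)
    (h1 : {w : List Bool | IsFactor u w} ≠ {w : List Bool | IsFactor u' w})
    (h2 : {w : List Bool | IsFactor u w} ≠
      List.reverse '' {w : List Bool | IsFactor u' w})
    (h3 : {w : List Bool | IsFactor u w} ≠
      (fun w : List Bool => w.map (fun b => !b)) '' {w : List Bool | IsFactor u' w})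
    (h4 : {w : List Bool | IsFactor u w} ≠
      (fun w : List Bool => w.map (fun b => !b)) ''
        (List.reverse '' {w : List Bool | IsFactor u' w})) :
    (¬ AgeSubset (GhatXor u) (GhatXor u') ∧ ¬ AgeSubset (GhatXor u') (GhatXor u)) ∧
      (¬ AgeSubset (GhatPi2 u) (GhatPi2 u') ∧ ¬ AgeSubset (GhatPi2 u') (GhatPi2 u)) := by
  have hne : ∀ r c, {w | IsFactor u w} ≠ wordSymm r c '' {w | IsFactor u' w} := by
    rintro (_ | _) (_ | _)
    · rwa [show wordSymm false false = id from funext fun w => by simp [wordSymm], Set.image_id]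
    · rwa [show wordSymm false true = List.map (!·) from funext fun w => by simp [wordSymm]]
    · rwa [show wordSymm true false = List.reverse from funext fun w => by simp [wordSymm]]
    · rw [Set.image_image] at h4
      rwa [show wordSymm true true = fun w => w.reverse.map (!·) from
        funext fun w => by simp [wordSymm]]
  have hne' : ∀ r c, {w | IsFactor u' w} ≠ wordSymm r c '' {w | IsFactor u w} :=
    fun r c h => hne r c (by rw [h, (wordSymm_involutive r c).leftInverse.image_image])
  exact ⟨⟨not_ageSubset_ghatXor hur hur' hnc hnc' hne, not_ageSubset_ghatXor hur' hur hnc' hnc hne'⟩,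
    not_ageSubset_ghatPi2 hur hur' hnc hnc' hne, not_ageSubset_ghatPi2 hur' hur hnc' hnc hne'⟩
end
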